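/- Under the same setting, if A has full column rank and η(μ_i, r_i) < 0 for all i with all r_i ≠ 0, then the Hessian of f at y is negative definite, hence f is strictly concave in a neighborhood of y. -/

import Mathlib

/-! Write f(v) = ∑ᵢ gᵢ((Av)ᵢ) with gᵢ(s) = (zᵢ - s)² / σ(s)². A direct computation gives
gᵢ''(μ) = 2 η(μ, zᵢ - μ) (zᵢ - μ)² / σ(μ)², so the Hessian of f at y is Aᵀ diag(gᵢ''(μᵢ)) A, which
is negative definite because every gᵢ''(μᵢ) < 0 and A is injective. By continuity of gᵢ'' each gᵢ
is strictly concave on a ball around μᵢ, and a sum of strictly concave functions of separate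
coordinates, precomposed with an injective linear map, is strictly concave. -/

open Finset

noncomputable def eta (σ : ℝ → ℝ) (μ r : ℝ) : ℝ :=
  (1 / r + 2 * deriv σ μ / σ μ) ^ 2 -
    ((deriv σ μ / σ μ) ^ 2 + deriv (deriv σ) μ / σ μ)

open Filter Topology Metric
open scoped Matrix

theorem Matrix.mulVec_injective_of_rank_eq {K m n : Type*} [Field K] [Fintype m] [Fintype n]
    {A : Matrix m n K} (hA : A.rank = Fintype.card n) : Function.Injective A.mulVec := by
  have hker : Module.finrank K (LinearMap.ker A.mulVecLin) = 0 := by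
    have := LinearMap.finrank_range_add_finrank_ker A.mulVecLin
    rw [← Matrix.rank, hA, Module.finrank_fintype_fun_eq_card] at this
    omega
  exact LinearMap.ker_eq_bot.mp (Submodule.finrank_eq_zero.mp hker)

theorem Matrix.posDef_of_sum_mul_mul {m n : Type*} [Fintype m] [Fintype n] [DecidableEq m]
    {A : Matrix m n ℝ} {c : m → ℝ} (hc : ∀ i, 0 < c i) (hA : Function.Injective A.mulVec) :
    (Matrix.of fun k l => ∑ i, A i k * A i l * c i).PosDef := by
  have hfactor : (Matrix.of fun k l => ∑ i, A i k * A i l * c i) = Aᴴ * diagonal c * A := by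
    ext k l
    simp only [of_apply, mul_apply (M := Aᴴ * diagonal c), mul_diagonal, conjTranspose_apply,
      star_trivial]
    exact sum_congr rfl fun i _ => by ring
  rw [hfactor]
  exact (PosDef.diagonal hc).conjTranspose_mul_mul_same hA

theorem StrictConcaveOn.comp_linearMap_of_injective {𝕜 E F β : Type*} [Semiring 𝕜]
    [PartialOrder 𝕜] [AddCommMonoid E] [AddCommMonoid F] [AddCommMonoid β] [PartialOrder β]
    [Module 𝕜 E] [Module 𝕜 F] [SMul 𝕜 β] {f : F → β} {s : Set F}
    (hf : StrictConcaveOn 𝕜 s f) {g : E →ₗ[𝕜] F} (hg : Function.Injective g) :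
    StrictConcaveOn 𝕜 (g ⁻¹' s) (f ∘ g) :=
  ⟨hf.1.linear_preimage g, fun x hx y hy hxy a b ha hb hab => by
    simpa only [Function.comp, map_add, map_smul] using hf.2 hx hy (hg.ne hxy) ha hb hab⟩

theorem StrictConcaveOn.sum_pi {ι : Type*} [Fintype ι] {φ : ι → ℝ → ℝ} {S : ι → Set ℝ}
    (hφ : ∀ i, StrictConcaveOn ℝ (S i) (φ i)) :
    StrictConcaveOn ℝ (Set.univ.pi S) (fun w => ∑ i, φ i (w i)) := by
  refine ⟨convex_pi fun i _ => (hφ i).1, fun x hx w hw hxw a b ha hb hab => ?_⟩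
  obtain ⟨i₀, hi₀⟩ := Function.ne_iff.mp hxw
  simp only [Set.mem_univ_pi] at hx hw
  simp only [smul_eq_mul, mul_sum, ← sum_add_distrib, Pi.add_apply, Pi.smul_apply]
  refine sum_lt_sum (fun i _ => (hφ i).concaveOn.2 (hx i) (hw i) ha.le hb.le hab) ?_
  exact ⟨i₀, mem_univ _, (hφ i₀).2 (hx i₀) (hw i₀) hi₀ ha hb hab⟩

theorem exists_strictConcaveOn_ball_of_deriv_deriv_neg {f : ℝ → ℝ} {x : ℝ}
    (hf : ContDiffAt ℝ 2 f x) (hf'' : deriv (deriv f) x < 0) :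
    ∃ δ > 0, StrictConcaveOn ℝ (ball x δ) f := by
  have hcont'' : ContinuousAt (deriv (deriv f)) x :=
    ((hf.derivWithin (m := 1) le_rfl).derivWithin (m := 0) le_rfl).continuousAt
  have hnear : ∀ᶠ t in 𝓝 x, ContDiffAt ℝ 2 f t ∧ deriv (deriv f) t < 0 :=
    (hf.eventually (by simp)).and (hcont''.eventually (gt_mem_nhds hf''))
  obtain ⟨δ, hδ, hball⟩ := eventually_nhds_iff_ball.mp hnear
  refine ⟨δ, hδ, strictConcaveOn_of_deriv2_neg' (convex_ball x δ) ?_ fun t ht => (hball t ht).2⟩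
  exact fun t ht => (hball t ht).1.continuousAt.continuousWithinAt

theorem hasDerivAt_sub_sq_div_sq {σ : ℝ → ℝ} {d z s : ℝ} (hσ : HasDerivAt σ d s)
    (hs : σ s ≠ 0) :
    HasDerivAt (fun t => (z - t) ^ 2 / σ t ^ 2)
      ((-2 * (z - s) * σ s - 2 * (z - s) ^ 2 * d) / σ s ^ 3) s := by
  have hnum : HasDerivAt (fun t => (z - t) ^ 2) (-(2 * (z - s))) s := by
    simpa using ((hasDerivAt_id s).const_sub z).fun_pow 2
  refine (hnum.fun_div (hσ.fun_pow 2) (pow_ne_zero 2 hs)).congr_deriv ?_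
  field_simp
  ring

theorem hasDerivAt_deriv_sub_sq_div_sq {σ : ℝ → ℝ} {z s : ℝ}
    (hσ : HasDerivAt σ (deriv σ s) s) (hσ' : HasDerivAt (deriv σ) (deriv (deriv σ) s) s)
    (hs : σ s ≠ 0) (hr : z - s ≠ 0) :
    HasDerivAt (fun t => (-2 * (z - t) * σ t - 2 * (z - t) ^ 2 * deriv σ t) / σ t ^ 3)
      (2 * eta σ s (z - s) * (z - s) ^ 2 / σ s ^ 2) s := by
  have hres : HasDerivAt (fun t => z - t) (-1) s := (hasDerivAt_id s).const_sub z
  have hnum := ((hres.const_mul (-2)).fun_mul hσ).fun_sub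
    (((hres.fun_pow 2).const_mul 2).fun_mul hσ')
  refine (hnum.fun_div (hσ.fun_pow 3) (pow_ne_zero 3 hs)).congr_deriv ?_
  unfold eta
  field_simp
  ring

theorem deriv_deriv_sub_sq_div_sq {σ : ℝ → ℝ} {z μ : ℝ} (hσ : ContDiffAt ℝ 2 σ μ)
    (hμ : σ μ ≠ 0) (hr : z - μ ≠ 0) :
    deriv (deriv fun t => (z - t) ^ 2 / σ t ^ 2) μ =
      2 * eta σ μ (z - μ) * (z - μ) ^ 2 / σ μ ^ 2 := by
  have hσ' : ContDiffAt ℝ 1 (deriv σ) μ := hσ.derivWithin le_rfl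
  have hderiv : deriv (fun t => (z - t) ^ 2 / σ t ^ 2) =ᶠ[𝓝 μ]
      fun t => (-2 * (z - t) * σ t - 2 * (z - t) ^ 2 * deriv σ t) / σ t ^ 3 := by
    filter_upwards [hσ.eventually (by simp), hσ.continuousAt.eventually_ne hμ] with t ht htne
    exact (hasDerivAt_sub_sq_div_sq (ht.differentiableAt (by simp)).hasDerivAt htne).deriv
  rw [hderiv.deriv_eq]
  exact (hasDerivAt_deriv_sub_sq_div_sq (hσ.differentiableAt (by simp)).hasDerivAt
    (hσ'.differentiableAt one_ne_zero).hasDerivAt hμ hr).deriv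

theorem exists_strictConcaveOn_ball_sub_sq_div_sq {σ : ℝ → ℝ} {z μ : ℝ}
    (hσ : ContDiffAt ℝ 2 σ μ) (hμ : σ μ ≠ 0) (hr : z - μ ≠ 0) (hη : eta σ μ (z - μ) < 0) :
    ∃ δ > 0, StrictConcaveOn ℝ (ball μ δ) fun t => (z - t) ^ 2 / σ t ^ 2 := by
  refine exists_strictConcaveOn_ball_of_deriv_deriv_neg
    (((contDiffAt_const.sub contDiffAt_id).pow 2).div (hσ.pow 2) (pow_ne_zero 2 hμ)) ?_
  rw [deriv_deriv_sub_sq_div_sq hσ hμ hr]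
  exact div_neg_of_neg_of_pos (mul_neg_of_neg_of_pos (by linarith) (sq_pos_of_ne_zero hr))
    (sq_pos_of_ne_zero hμ)

/-- If A has full column rank, σ is positive and C² near each μ_i, all residuals are
nonzero and η(μ_i, r_i) < 0 for all i, then the Hessian of f at y is negative definite
(i.e. its negation is positive definite), and hence f is strictly concave in a
neighborhood of y. -/
theorem hessian_negdef_strict_concave {m n : ℕ} (A : Matrix (Fin m) (Fin n) ℝ)
    (z : Fin m → ℝ) (σ : ℝ → ℝ) (y : Fin n → ℝ)
    (hrank : A.rank = n)
    (hσ : ∀ i, ContDiffAt ℝ 2 σ (A.mulVec y i))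
    (hσpos : ∀ i, 0 < σ (A.mulVec y i))
    (hr : ∀ i, z i - A.mulVec y i ≠ 0)
    (hη : ∀ i, eta σ (A.mulVec y i) (z i - A.mulVec y i) < 0) :
    (-(Matrix.of fun k l : Fin n =>
      2 * ∑ i, A i k * A i l * eta σ (A.mulVec y i) (z i - A.mulVec y i) *
        (z i - A.mulVec y i) ^ 2 / (σ (A.mulVec y i)) ^ 2)).PosDef ∧
    ∃ ε > 0, StrictConcaveOn ℝ (Metric.ball y ε)
      (fun v : Fin n → ℝ => ∑ i, (z i - A.mulVec v i) ^ 2 / (σ (A.mulVec v i)) ^ 2) := by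
  have hinj : Function.Injective A.mulVec :=
    Matrix.mulVec_injective_of_rank_eq (by rw [hrank, Fintype.card_fin])
  constructor
  · have hcoeff : ∀ i, 0 < -2 * eta σ (A.mulVec y i) (z i - A.mulVec y i) *
        (z i - A.mulVec y i) ^ 2 / σ (A.mulVec y i) ^ 2 := fun i =>
      div_pos (mul_pos (by linarith [hη i]) (sq_pos_of_ne_zero (hr i))) (pow_pos (hσpos i) 2)
    convert Matrix.posDef_of_sum_mul_mul hcoeff hinj using 1
    ext k l
    simp only [Matrix.neg_apply, Matrix.of_apply, mul_sum, ← sum_neg_distrib]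
    exact sum_congr rfl fun i _ => by ring
  · choose δ hδ hconc using fun i =>
      exists_strictConcaveOn_ball_sub_sq_div_sq (hσ i) (hσpos i).ne' (hr i) (hη i)
    have hsum := (StrictConcaveOn.sum_pi hconc).comp_linearMap_of_injective
      (g := A.mulVecLin) hinj
    have hnhds : A.mulVecLin ⁻¹' Set.univ.pi (fun i => ball (A.mulVec y i) (δ i)) ∈ 𝓝 y :=
      (isOpen_set_pi Set.finite_univ fun i _ => isOpen_ball).preimage
        A.mulVecLin.continuous_of_finiteDimensional |>.mem_nhds
        (Set.mem_univ_pi.mpr fun i => mem_ball_self (hδ i))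
    obtain ⟨ε, hε, hball⟩ := Metric.mem_nhds_iff.mp hnhds
    exact ⟨ε, hε, hsum.subset hball (convex_ball y ε)⟩
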